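/- Let 𝕂 be ℝ or ℂ, V a 𝕂-vector space, r ≥ 1, and let e ∈ 𝕂[S_r] be an idempotent (e·e = e). Then an r-linear map T : V^r → 𝕂 satisfies eT = T if and only if for every r-tuple b ∈ V^r the group algebra element T_b lies in the left ideal 𝕂[S_r]·e* = { x·e* : x ∈ 𝕂[S_r] }. -/

import Mathlib

/-- The action of a group-algebra element `a ∈ 𝕂[S_r]` on an `r`-linear map:
`(aT)(v₁,…,v_r) = Σ_p a(p)·T(v_{p(1)},…,v_{p(r)})`. -/
noncomputable def gaAct {𝕂 : Type*} [RCLike 𝕂] {V : Type*} [AddCommGroup V] [Module 𝕂 V]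
    {r : ℕ} (a : MonoidAlgebra 𝕂 (Equiv.Perm (Fin r)))
    (T : MultilinearMap 𝕂 (fun _ : Fin r => V) 𝕂) :
    MultilinearMap 𝕂 (fun _ : Fin r => V) 𝕂 :=
  ∑ p : Equiv.Perm (Fin r), a.coeff p • T.domDomCongr p

/-- The star map `a = Σ_p a(p)·p ↦ a* = Σ_p a(p)·p⁻¹` on the group algebra. -/
noncomputable def gaStar {𝕂 : Type*} [RCLike 𝕂] {r : ℕ}
    (a : MonoidAlgebra 𝕂 (Equiv.Perm (Fin r))) : MonoidAlgebra 𝕂 (Equiv.Perm (Fin r)) :=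
  ∑ p : Equiv.Perm (Fin r), MonoidAlgebra.single p⁻¹ (a.coeff p)

/-- The group algebra element `T_b = Σ_{p∈S_r} T(v_{p(1)},…,v_{p(r)})·p` induced by an
`r`-linear map `T` and an `r`-tuple `b = (v₁,…,v_r)`. -/
noncomputable def tb {𝕂 : Type*} [RCLike 𝕂] {V : Type*} [AddCommGroup V] [Module 𝕂 V]
    {r : ℕ} (T : MultilinearMap 𝕂 (fun _ : Fin r => V) 𝕂) (b : Fin r → V) :
    MonoidAlgebra 𝕂 (Equiv.Perm (Fin r)) :=
  ∑ p : Equiv.Perm (Fin r), MonoidAlgebra.single p (T (b ∘ p))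

/-! The identity `T_{aT, b} = T_b · a*` turns `eT = T` into `T_b · e* = T_b` for all `b`
(read off at the coefficient of the identity permutation). Since `*` reverses products,
`e*` is again idempotent, and for an idempotent `f` the elements `y` with `y · f = y` are
exactly those of the left ideal generated by `f`. -/

theorem IsIdempotentElem.mul_eq_self_iff_exists_eq_mul {M : Type*} [Semigroup M] {f : M}
    (hf : IsIdempotentElem f) (y : M) : y * f = y ↔ ∃ x, y = x * f := by
  constructor
  · intro h
    exact ⟨y, h.symm⟩
  · rintro ⟨x, rfl⟩
    rw [mul_assoc, hf.eq]

section GroupAlgebra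

variable {𝕂 : Type*} [RCLike 𝕂] {V : Type*} [AddCommGroup V] [Module 𝕂 V] {r : ℕ}

theorem gaStar_eq_mapDomain_inv (a : MonoidAlgebra 𝕂 (Equiv.Perm (Fin r))) :
    gaStar a = MonoidAlgebra.mapDomain (·⁻¹) a := by
  apply MonoidAlgebra.coeff_injective
  simp only [gaStar, MonoidAlgebra.mapDomain, Finsupp.mapDomain, MonoidAlgebra.coeff_sum,
    MonoidAlgebra.coeff_single, MonoidAlgebra.coeff_ofCoeff]
  rw [Finsupp.sum_fintype]
  simp

theorem gaStar_mul (x y : MonoidAlgebra 𝕂 (Equiv.Perm (Fin r))) :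
    gaStar (x * y) = gaStar y * gaStar x := by
  simp only [gaStar_eq_mapDomain_inv]
  induction x using MonoidAlgebra.induction_linear with
  | zero => simp
  | add x₁ x₂ h₁ h₂ =>
    rw [add_mul, MonoidAlgebra.mapDomain_add, h₁, h₂, MonoidAlgebra.mapDomain_add, mul_add]
  | single p c =>
    induction y using MonoidAlgebra.induction_linear with
    | zero => simp
    | add y₁ y₂ h₁ h₂ =>
      rw [mul_add, MonoidAlgebra.mapDomain_add, h₁, h₂, MonoidAlgebra.mapDomain_add, add_mul]
    | single q d =>
      simp only [MonoidAlgebra.single_mul_single, MonoidAlgebra.mapDomain_single, mul_inv_rev,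
        mul_comm c d]

theorem tb_coeff (T : MultilinearMap 𝕂 (fun _ : Fin r => V) 𝕂) (b : Fin r → V)
    (p : Equiv.Perm (Fin r)) : (tb T b).coeff p = T (b ∘ p) := by
  classical
  simp [tb, MonoidAlgebra.coeff_sum, Finsupp.single_apply]

theorem gaAct_apply (a : MonoidAlgebra 𝕂 (Equiv.Perm (Fin r)))
    (T : MultilinearMap 𝕂 (fun _ : Fin r => V) 𝕂) (v : Fin r → V) :
    gaAct a T v = ∑ q, a.coeff q * T (v ∘ q) := by
  simp [gaAct, MultilinearMap.domDomCongr_apply, Function.comp_def]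

theorem tb_gaAct (a : MonoidAlgebra 𝕂 (Equiv.Perm (Fin r)))
    (T : MultilinearMap 𝕂 (fun _ : Fin r => V) 𝕂) (b : Fin r → V) :
    tb (gaAct a T) b = tb T b * gaStar a := by
  apply MonoidAlgebra.coeff_injective
  ext p
  simp only [tb_coeff, gaAct_apply, gaStar, Finset.mul_sum, MonoidAlgebra.coeff_sum,
    Finset.sum_apply', MonoidAlgebra.coeff_mul_single_apply, inv_inv]
  exact Finset.sum_congr rfl fun q _ => mul_comm _ _

theorem gaAct_eq_self_iff (a : MonoidAlgebra 𝕂 (Equiv.Perm (Fin r)))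
    (T : MultilinearMap 𝕂 (fun _ : Fin r => V) 𝕂) :
    gaAct a T = T ↔ ∀ b : Fin r → V, tb T b * gaStar a = tb T b := by
  constructor
  · intro h b
    rw [← tb_gaAct, h]
  · intro h
    ext b
    simpa [tb_coeff] using congr_arg (·.coeff 1) ((tb_gaAct a T b).trans (h b))

end GroupAlgebra

theorem stmt9_general {𝕂 : Type*} [RCLike 𝕂] {V : Type*} [AddCommGroup V] [Module 𝕂 V]
    {r : ℕ}
    (e : MonoidAlgebra 𝕂 (Equiv.Perm (Fin r))) (he : e * e = e)
    (T : MultilinearMap 𝕂 (fun _ : Fin r => V) 𝕂) :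
    gaAct e T = T ↔
      ∀ b : Fin r → V, ∃ x : MonoidAlgebra 𝕂 (Equiv.Perm (Fin r)),
        tb T b = x * gaStar e := by
  have hstar : IsIdempotentElem (gaStar e) := by
    rw [IsIdempotentElem, ← gaStar_mul, he]
  rw [gaAct_eq_self_iff]
  exact forall_congr' fun b => hstar.mul_eq_self_iff_exists_eq_mul (tb T b)

/-- For an idempotent `e ∈ 𝕂[S_r]`: `eT = T` iff all `T_b` lie in the left ideal
`𝕂[S_r]·e* = {x·e* : x ∈ 𝕂[S_r]}`. -/
theorem stmt9 {𝕂 : Type*} [RCLike 𝕂] {V : Type*} [AddCommGroup V] [Module 𝕂 V]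
    {r : ℕ} (hr : 1 ≤ r)
    (e : MonoidAlgebra 𝕂 (Equiv.Perm (Fin r))) (he : e * e = e)
    (T : MultilinearMap 𝕂 (fun _ : Fin r => V) 𝕂) :
    gaAct e T = T ↔
      ∀ b : Fin r → V, ∃ x : MonoidAlgebra 𝕂 (Equiv.Perm (Fin r)),
        tb T b = x * gaStar e :=
  stmt9_general e he T
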